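/- arXiv:1812.07140 — 4 statements merged into one kernel-verified Lean document; each statement's English description precedes it below -/
import Mathlib

section
/- Let L be a natural number and let V_l, C_l, M_l (for l = 0,…,L) and ε be strictly positive real numbers. If the total variance satisfies ∑_{l=0}^{L} V_l / M_l ≤ ε², then the total cost satisfies ∑_{l=0}^{L} M_l · C_l ≥ ε^{-2} · ( ∑_{l=0}^{L} √(C_l · V_l) )². -/
/-! Cauchy–Schwarz applied to `√(C V) = √(M C) · √(V / M)`. -/

open Finset

theorem sq_sum_sqrt_mul_le_sum_mul_mul_sum_div {ι : Type*} (s : Finset ι) {C V M : ι → ℝ}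
    (hC : ∀ i ∈ s, 0 ≤ C i) (hV : ∀ i ∈ s, 0 ≤ V i) (hM : ∀ i ∈ s, 0 < M i) :
    (∑ i ∈ s, √(C i * V i)) ^ 2 ≤ (∑ i ∈ s, M i * C i) * ∑ i ∈ s, V i / M i :=
  sum_sq_le_sum_mul_sum_of_sq_le_mul s
    (fun i hi => mul_nonneg (hM i hi).le (hC i hi))
    (fun i hi => div_nonneg (hV i hi) (hM i hi).le)
    (fun i hi => le_of_eq <| by
      rw [Real.sq_sqrt (mul_nonneg (hC i hi) (hV i hi))]
      field_simp [(hM i hi).ne'])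

/-- MLMC cost lower bound: if the total sampling variance `∑ V l / M l` is at most `ε²`,
then the total cost `∑ M l * C l` is at least `ε⁻² (∑ √(C l V l))²`. -/
theorem mlmc_cost_lower_bound (L : ℕ) (V C M : Fin (L + 1) → ℝ) (ε : ℝ)
    (hV : ∀ l, 0 < V l) (hC : ∀ l, 0 < C l) (hM : ∀ l, 0 < M l) (hε : 0 < ε)
    (hvar : ∑ l, V l / M l ≤ ε ^ 2) :
    ∑ l, M l * C l ≥ (ε ^ 2)⁻¹ * (∑ l, Real.sqrt (C l * V l)) ^ 2 := by
  have hcost : 0 ≤ ∑ l, M l * C l := sum_nonneg fun l _ => (mul_pos (hM l) (hC l)).le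
  have hcs : (∑ l, √(C l * V l)) ^ 2 ≤ (∑ l, M l * C l) * ε ^ 2 :=
    calc (∑ l, √(C l * V l)) ^ 2 ≤ (∑ l, M l * C l) * ∑ l, V l / M l :=
          sq_sum_sqrt_mul_le_sum_mul_mul_sum_div univ (fun l _ => (hC l).le)
            (fun l _ => (hV l).le) (fun l _ => hM l)
      _ ≤ (∑ l, M l * C l) * ε ^ 2 := mul_le_mul_of_nonneg_left hvar hcost
  rw [ge_iff_le, inv_mul_le_iff₀ (by positivity), mul_comm]
  exact hcs
end

section
/- Let L be a natural number and let V_l, C_l (for l = 0,…,L) and ε be strictly positive real numbers. Define the weights a_l = √(C_l V_l) / ∑_{k=0}^{L} √(C_k V_k) and the (real-valued) sample numbers M_l = V_l / (a_l ε²) = ε^{-2} √(V_l / C_l) · ∑_{k=0}^{L} √(C_k V_k). Then ∑_{l=0}^{L} a_l = 1, the sampling error satisfies ∑_{l=0}^{L} V_l / M_l = ε², and the total cost satisfies ∑_{l=0}^{L} M_l · C_l = ε^{-2} · ( ∑_{k=0}^{L} √(C_k V_k) )². -/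
/-- The optimal MLMC sample allocation `M l = V l / (a l ε²)` with weights
`a l = √(C l V l) / ∑ √(C k V k)` has weights summing to one, exactly attains the
sampling-error budget `ε²`, and has total cost `ε⁻² (∑ √(C k V k))²`. -/
theorem mlmc_optimal_allocation (L : ℕ) (V C : Fin (L + 1) → ℝ) (ε : ℝ)
    (hV : ∀ l, 0 < V l) (hC : ∀ l, 0 < C l) (hε : 0 < ε)
    (a M : Fin (L + 1) → ℝ)
    (ha : ∀ l, a l = Real.sqrt (C l * V l) / ∑ k, Real.sqrt (C k * V k))
    (hM : ∀ l, M l = V l / (a l * ε ^ 2)) :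
    (∑ l, a l = 1) ∧
    (∀ l, M l = (ε ^ 2)⁻¹ * Real.sqrt (V l / C l) * ∑ k, Real.sqrt (C k * V k)) ∧
    (∑ l, V l / M l = ε ^ 2) ∧
    (∑ l, M l * C l = (ε ^ 2)⁻¹ * (∑ k, Real.sqrt (C k * V k)) ^ 2) := by
  set S : ℝ := ∑ k, Real.sqrt (C k * V k) with hS
  have hsq : ∀ l, 0 < Real.sqrt (C l * V l) := fun l =>
    Real.sqrt_pos.mpr (mul_pos (hC l) (hV l))
  have hSpos : 0 < S := Finset.sum_pos (fun l _ => hsq l) Finset.univ_nonempty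
  have hε2 : (0:ℝ) < ε ^ 2 := by positivity
  have hapos : ∀ l, 0 < a l := fun l => (ha l) ▸ div_pos (hsq l) hSpos
  have hsum1 : ∑ l, a l = 1 := by
    simp only [ha]
    rw [← Finset.sum_div, div_self hSpos.ne']
  have hMform : ∀ l, M l = (ε ^ 2)⁻¹ * Real.sqrt (V l / C l) * S := by
    intro l
    rw [hM l, ha l]
    have h1 : Real.sqrt (V l / C l) = V l / Real.sqrt (C l * V l) := by
      have he : V l / C l = V l ^ 2 / (C l * V l) := by
        rw [pow_two, mul_comm (C l) (V l), mul_div_mul_left _ _ (hV l).ne']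
      rw [he, Real.sqrt_div (sq_nonneg _), Real.sqrt_sq (hV l).le]
    rw [h1]
    field_simp
  refine ⟨hsum1, hMform, ?_, ?_⟩
  · have : ∀ l, V l / M l = a l * ε ^ 2 := by
      intro l
      rw [hM l, div_div_eq_mul_div, mul_comm, mul_div_assoc,
        div_self (hV l).ne', mul_one]
    simp only [this, ← Finset.sum_mul, hsum1, one_mul]
  · have : ∀ l, M l * C l = (ε ^ 2)⁻¹ * S * Real.sqrt (C l * V l) := by
      intro l
      rw [hMform l]
      have h2 : Real.sqrt (V l / C l) * C l = Real.sqrt (C l * V l) := by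
        have he : V l / C l = (C l * V l) / C l ^ 2 := by
          rw [pow_two, mul_div_mul_left _ _ (hC l).ne']
        rw [he, Real.sqrt_div (mul_pos (hC l) (hV l)).le, Real.sqrt_sq (hC l).le,
          div_mul_cancel₀ _ (hC l).ne']
      calc (ε ^ 2)⁻¹ * Real.sqrt (V l / C l) * S * C l
          = (ε ^ 2)⁻¹ * S * (Real.sqrt (V l / C l) * C l) := by ring
        _ = (ε ^ 2)⁻¹ * S * Real.sqrt (C l * V l) := by rw [h2]
    simp only [this, ← Finset.mul_sum, ← hS]
    ring
end

section
/- Let q > 1, h_0 > 0, and α, β, ρ, c_1, c_2, c_3 > 0 be real numbers with ρ > β and 2α ≥ β, and set h_l = q^{-l} h_0. Then there exists a constant c_4 > 0 such that for every ε with 0 < ε < e^{-1} there exist a natural number L and positive integers M_0, …, M_L satisfying: (i) c_1² h_L^{2α} + ∑_{l=0}^{L} c_2 h_l^{β} / M_l ≤ ε², and (ii) ∑_{l=0}^{L} M_l · c_3 h_l^{-ρ} ≤ c_4 · ε^{-2 - (ρ - β)/α}. -/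
/-!
Take the finest level `L` to be one at which the squared bias `c₁² h_L^{2α}` is at most `ε²/2`;
since the step sizes shrink geometrically, it can be chosen with `h_L ≥ κ ε^{1/α}`. Sample sizes
`M_l ≈ (2/ε²) √(V_l/C_l) ∑ₖ √(V_k C_k)` (the Lagrange-optimal allocation) make the sampling error
at most `ε²/2` at cost `(2/ε²) (∑ₗ √(V_l C_l))² + ∑ₗ C_l`. Because `ρ > β`, both sums are geometric
series dominated by their finest term, so the cost is `O(ε⁻² h_L^{-(ρ-β)} + h_L^{-ρ})`, i.e.
`O(ε^{-2-(ρ-β)/α})`; the second term is of no larger order exactly because `β ≤ 2α`.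
-/

open Finset

lemma exists_sampleSizes_le {ι : Type*} [Fintype ι] (V C : ι → ℝ) (hV : ∀ i, 0 < V i)
    (hC : ∀ i, 0 < C i) {δ : ℝ} (hδ : 0 < δ) :
    ∃ M : ι → ℕ, (∀ i, 0 < M i) ∧ ∑ i, V i / M i ≤ δ ∧
      ∑ i, (M i : ℝ) * C i ≤ (∑ i, √(V i * C i)) ^ 2 / δ + ∑ i, C i := by
  set S := ∑ i, √(V i * C i)
  have hS : ∀ i, 0 < S := fun i =>
    (Real.sqrt_pos.2 (mul_pos (hV i) (hC i))).trans_le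
      (single_le_sum (fun j _ => Real.sqrt_nonneg (V j * C j)) (mem_univ i))
  let x i := √(V i / C i) * S / δ
  have hx : ∀ i, 0 < x i := fun i => by
    have := hS i; have := hV i; have := hC i; positivity
  have hsqrt : ∀ i, √(V i / C i) = √(V i) / √(C i) ∧ √(V i * C i) = √(V i) * √(C i) :=
    fun i => ⟨Real.sqrt_div' _ (hC i).le, Real.sqrt_mul (hV i).le _⟩
  have hxC : ∀ i, x i * C i = S / δ * √(V i * C i) := fun i => by
    have := Real.sqrt_pos.2 (hC i)
    simp only [x, hsqrt]
    field_simp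
    rw [Real.sq_sqrt (hC i).le]
    ring
  have hVx : ∀ i, V i / x i = δ / S * √(V i * C i) := fun i => by
    have := hS i
    have := Real.sqrt_pos.2 (hC i)
    have := Real.sqrt_pos.2 (hV i)
    simp only [x, hsqrt]
    field_simp
    rw [Real.sq_sqrt (hV i).le]
  refine ⟨fun i => ⌈x i⌉₊, fun i => Nat.ceil_pos.2 (hx i), ?_, ?_⟩
  · calc ∑ i, V i / ⌈x i⌉₊ ≤ ∑ i, V i / x i :=
          sum_le_sum fun i _ => div_le_div_of_nonneg_left (hV i).le (hx i) (Nat.le_ceil _)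
      _ = δ / S * S := by simp_rw [hVx, ← mul_sum]; rfl
      _ ≤ δ := by
          rcases isEmpty_or_nonempty ι with hι | ⟨⟨i⟩⟩
          · simp [S, hδ.le]
          · rw [div_mul_cancel₀ _ (hS i).ne']
  · calc ∑ i, (⌈x i⌉₊ : ℝ) * C i ≤ ∑ i, (x i + 1) * C i :=
          sum_le_sum fun i _ =>
            mul_le_mul_of_nonneg_right (Nat.ceil_lt_add_one (hx i).le).le (hC i).le
      _ = S ^ 2 / δ + ∑ i, C i := by
          simp_rw [add_mul, one_mul, sum_add_distrib, hxC, ← mul_sum]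
          ring

noncomputable def geomSumConst (q γ : ℝ) : ℝ := q ^ γ / (q ^ γ - 1)

lemma geomSumConst_pos {q γ : ℝ} (hq : 1 < q) (hγ : 0 < γ) : 0 < geomSumConst q γ := by
  have := Real.one_lt_rpow hq hγ
  unfold geomSumConst
  exact div_pos (by linarith) (by linarith)

section GeometricLevels

variable {q h0 : ℝ} {h : ℕ → ℝ}

lemma geometricLevel_pos (hq : 1 < q) (hh0 : 0 < h0) (hh : ∀ l, h l = q ^ (-(l : ℤ)) * h0)
    (l : ℕ) : 0 < h l := by
  rw [hh l]
  have : 0 < q := by linarith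
  positivity

lemma geometricLevel_rpow_neg (hq : 1 < q) (hh0 : 0 < h0) (hh : ∀ l, h l = q ^ (-(l : ℤ)) * h0)
    (γ : ℝ) (l : ℕ) : h l ^ (-γ) = h0 ^ (-γ) * (q ^ γ) ^ l := by
  have hq0 : 0 ≤ q := by linarith
  rw [hh l, zpow_neg, zpow_natCast, Real.mul_rpow (by positivity) hh0.le,
    Real.inv_rpow (by positivity), Real.rpow_neg (by positivity), inv_inv,
    Real.rpow_pow_comm hq0, mul_comm]

lemma sum_geometricLevel_rpow_neg_le (hq : 1 < q) (hh0 : 0 < h0)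
    (hh : ∀ l, h l = q ^ (-(l : ℤ)) * h0) {γ : ℝ} (hγ : 0 < γ) (L : ℕ) :
    ∑ l : Fin (L + 1), h l ^ (-γ) ≤ geomSumConst q γ * h L ^ (-γ) := by
  have hr : 1 < q ^ γ := Real.one_lt_rpow hq hγ
  simp_rw [geometricLevel_rpow_neg hq hh0 hh, ← mul_sum]
  rw [Fin.sum_univ_eq_sum_range (fun l => (q ^ γ) ^ l), geom_sum_eq hr.ne', geomSumConst,
    pow_succ]
  have : 0 < q ^ γ - 1 := by linarith
  have : 0 < h0 ^ (-γ) * (q ^ γ) ^ L := by positivity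
  field_simp
  linarith

lemma exists_geometricLevel_mem_Icc (hq : 1 < q)
    (hh : ∀ l, h l = q ^ (-(l : ℤ)) * h0) {t : ℝ} (ht : 0 < t) :
    ∃ L, min h0 (t / q) ≤ h L ∧ h L ≤ t := by
  rcases le_or_gt h0 t with hle | hlt
  · exact ⟨0, by simp [hh 0], by simpa [hh 0] using hle⟩
  obtain ⟨n, hn, hn1⟩ := exists_nat_pow_near (one_le_div ht |>.2 hlt.le) hq
  have hq0 : 0 < q := by linarith
  have hhn : h (n + 1) = h0 / q ^ n / q := by
    rw [hh, zpow_neg, zpow_natCast, pow_succ, inv_mul_eq_div, div_div]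
  refine ⟨n + 1, min_le_of_right_le ?_, ?_⟩
  · rw [hhn]
    gcongr
    rwa [le_div_iff₀ (by positivity), mul_comm, ← le_div_iff₀ ht]
  · rw [hhn, div_div, ← pow_succ, div_le_iff₀ (by positivity), mul_comm, ← div_le_iff₀ ht]
    exact hn1.le

lemma exists_sampleSizes_geometricLevel (hq : 1 < q) (hh0 : 0 < h0)
    (hh : ∀ l, h l = q ^ (-(l : ℤ)) * h0) {c2 c3 β ρ : ℝ} (hc2 : 0 < c2) (hc3 : 0 < c3)
    (hρ : 0 < ρ) (hρβ : β < ρ) (L : ℕ) {δ : ℝ} (hδ : 0 < δ) :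
    ∃ M : Fin (L + 1) → ℕ, (∀ l, 0 < M l) ∧
      ∑ l : Fin (L + 1), c2 * h l ^ β / (M l : ℝ) ≤ δ ∧
      ∑ l : Fin (L + 1), (M l : ℝ) * (c3 * h l ^ (-ρ)) ≤
        c2 * c3 * geomSumConst q ((ρ - β) / 2) ^ 2 * h L ^ (-(ρ - β)) / δ +
          c3 * geomSumConst q ρ * h L ^ (-ρ) := by
  have hpos := geometricLevel_pos hq hh0 hh
  obtain ⟨M, hM, hvar, hcost⟩ := exists_sampleSizes_le (fun l : Fin (L + 1) => c2 * h l ^ β)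
    (fun l => c3 * h l ^ (-ρ)) (fun l => by have := hpos l; positivity)
    (fun l => by have := hpos l; positivity) hδ
  refine ⟨M, hM, hvar, hcost.trans ?_⟩
  have hsqrt : ∀ l, √(c2 * h l ^ β * (c3 * h l ^ (-ρ))) =
      √(c2 * c3) * h l ^ (-((ρ - β) / 2)) := fun l => by
    rw [mul_mul_mul_comm, ← Real.rpow_add (hpos l), Real.sqrt_mul (by positivity),
      Real.sqrt_eq_rpow (h l ^ _), ← Real.rpow_mul (hpos l).le]
    ring_nf
  have hS : ∑ l : Fin (L + 1), √(c2 * h l ^ β * (c3 * h l ^ (-ρ))) ≤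
      √(c2 * c3) * (geomSumConst q ((ρ - β) / 2) * h L ^ (-((ρ - β) / 2))) := by
    simp_rw [hsqrt, ← mul_sum]
    gcongr
    exact sum_geometricLevel_rpow_neg_le hq hh0 hh (by linarith) L
  have hC : ∑ l : Fin (L + 1), c3 * h l ^ (-ρ) ≤ c3 * (geomSumConst q ρ * h L ^ (-ρ)) := by
    rw [← mul_sum]
    gcongr
    exact sum_geometricLevel_rpow_neg_le hq hh0 hh hρ L
  have hsq : (√(c2 * c3) * (geomSumConst q ((ρ - β) / 2) * h L ^ (-((ρ - β) / 2)))) ^ 2 =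
      c2 * c3 * geomSumConst q ((ρ - β) / 2) ^ 2 * h L ^ (-(ρ - β)) := by
    rw [mul_pow, mul_pow, Real.sq_sqrt (by positivity), ← Real.rpow_mul_natCast (hpos L).le]
    ring_nf
  calc _ ≤ (√(c2 * c3) * (geomSumConst q ((ρ - β) / 2) * h L ^ (-((ρ - β) / 2)))) ^ 2 / δ +
        c3 * (geomSumConst q ρ * h L ^ (-ρ)) := by
        gcongr
    _ = _ := by rw [hsq]; ring

lemma exists_geometricLevel_bias_le (hq : 1 < q) (hh0 : 0 < h0)
    (hh : ∀ l, h l = q ^ (-(l : ℤ)) * h0) {c1 α : ℝ} (hc1 : 0 < c1) (hα : 0 < α) :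
    ∃ κ > 0, ∀ ε, 0 < ε → ε ≤ 1 →
      ∃ L, c1 ^ 2 * h L ^ (2 * α) ≤ ε ^ 2 / 2 ∧ κ * ε ^ (1 / α) ≤ h L := by
  have hq0 : 0 < q := by linarith
  set a := (2 * c1 ^ 2) ^ (-1 / (2 * α))
  have ha : 0 < a := by positivity
  refine ⟨min h0 (a / q), by positivity, fun ε hε hε1 => ?_⟩
  have hε' : 0 < ε ^ (1 / α) := by positivity
  obtain ⟨L, hlow, hup⟩ := exists_geometricLevel_mem_Icc hq hh (mul_pos ha hε')
  refine ⟨L, ?_, le_trans ?_ hlow⟩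
  · calc c1 ^ 2 * h L ^ (2 * α) ≤ c1 ^ 2 * (a * ε ^ (1 / α)) ^ (2 * α) := by
          gcongr
          exact (geometricLevel_pos hq hh0 hh L).le
      _ = c1 ^ 2 * ((2 * c1 ^ 2) ^ (-1 : ℝ) * ε ^ (2 : ℝ)) := by
          rw [Real.mul_rpow ha.le hε'.le, ← Real.rpow_mul (by positivity),
            ← Real.rpow_mul hε.le]
          congr 3 <;> field_simp
      _ = ε ^ 2 / 2 := by
          rw [Real.rpow_neg_one, Real.rpow_two]
          field_simp
  · have : ε ^ (1 / α) ≤ 1 := Real.rpow_le_one hε.le hε1 (by positivity)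
    rw [min_mul_of_nonneg _ _ hε'.le, div_mul_eq_mul_div]
    exact min_le_min (mul_le_of_le_one_right hh0.le this) le_rfl

end GeometricLevels

lemma rpow_neg_le_of_mul_rpow_le {κ ε α γ x : ℝ} (hκ : 0 < κ) (hε : 0 < ε)
    (hx : κ * ε ^ (1 / α) ≤ x) (hγ : 0 ≤ γ) : x ^ (-γ) ≤ κ ^ (-γ) * ε ^ (-γ / α) := by
  calc x ^ (-γ) ≤ (κ * ε ^ (1 / α)) ^ (-γ) :=
        Real.rpow_le_rpow_of_nonpos (by positivity) hx (neg_nonpos.2 hγ)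
    _ = κ ^ (-γ) * ε ^ (-γ / α) := by
        rw [Real.mul_rpow hκ.le (by positivity), ← Real.rpow_mul hε.le]
        ring_nf

theorem mlmc_complexity_rho_gt_beta_general (q h0 α β ρ c1 c2 c3 : ℝ)
    (hq : 1 < q) (hh0 : 0 < h0) (hα : 0 < α) (hρ : 0 < ρ)
    (hc1 : 0 < c1) (hc2 : 0 < c2) (hc3 : 0 < c3)
    (hρβ : β < ρ) (hαβ : β ≤ 2 * α)
    (h : ℕ → ℝ) (hh : ∀ l, h l = q ^ (-(l : ℤ)) * h0) :
    ∃ c4 > (0 : ℝ), ∀ ε : ℝ, 0 < ε → ε < Real.exp (-1) →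
      ∃ (L : ℕ) (M : Fin (L + 1) → ℕ),
        (∀ l, 0 < M l) ∧
        c1 ^ 2 * h L ^ (2 * α) + ∑ l : Fin (L + 1), c2 * h l ^ β / (M l : ℝ) ≤ ε ^ 2 ∧
        ∑ l : Fin (L + 1), (M l : ℝ) * (c3 * h l ^ (-ρ)) ≤
          c4 * ε ^ (-2 - (ρ - β) / α) := by
  obtain ⟨κ, hκ, hlevel⟩ := exists_geometricLevel_bias_le hq hh0 hh hc1 hα
  have hgρ := geomSumConst_pos hq hρ
  have hgρβ := geomSumConst_pos hq (half_pos (sub_pos.2 hρβ))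
  set K := c2 * c3 * geomSumConst q ((ρ - β) / 2) ^ 2 * κ ^ (-(ρ - β))
  set K' := c3 * geomSumConst q ρ * κ ^ (-ρ)
  refine ⟨2 * K + K', by positivity, fun ε hε hεe => ?_⟩
  have hε1 : ε ≤ 1 := (hεe.trans (Real.exp_lt_one_iff.2 (by norm_num))).le
  obtain ⟨L, hbias, hL⟩ := hlevel ε hε hε1
  obtain ⟨M, hM, hvar, hcost⟩ := exists_sampleSizes_geometricLevel hq hh0 hh hc2 hc3 hρ hρβ L
    (half_pos (pow_pos hε 2))
  refine ⟨L, M, hM, by linarith, hcost.trans ?_⟩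
  have hε2 : ε ^ (-(ρ - β) / α) = ε ^ 2 * ε ^ (-2 - (ρ - β) / α) := by
    rw [← Real.rpow_two, ← Real.rpow_add hε]
    ring_nf
  have hερ : ε ^ (-ρ / α) ≤ ε ^ (-2 - (ρ - β) / α) := by
    refine Real.rpow_le_rpow_of_exponent_ge hε hε1 (sub_nonneg.1 ?_)
    rw [show -ρ / α - (-2 - (ρ - β) / α) = (2 * α - β) / α by field_simp; ring]
    exact div_nonneg (by linarith) hα.le
  calc _ ≤ c2 * c3 * geomSumConst q ((ρ - β) / 2) ^ 2 * (κ ^ (-(ρ - β)) * ε ^ (-(ρ - β) / α)) /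
        (ε ^ 2 / 2) + c3 * geomSumConst q ρ * (κ ^ (-ρ) * ε ^ (-ρ / α)) := by
        gcongr
        · exact rpow_neg_le_of_mul_rpow_le hκ hε hL (sub_pos.2 hρβ).le
        · exact rpow_neg_le_of_mul_rpow_le hκ hε hL hρ.le
    _ = 2 * K * ε ^ (-2 - (ρ - β) / α) + K' * ε ^ (-ρ / α) := by
        rw [hε2]
        field_simp
        ring
    _ ≤ (2 * K + K') * ε ^ (-2 - (ρ - β) / α) := by
        rw [add_mul]
        gcongr

/-- MLMC complexity theorem, case `ρ > β`: with bias bound `c₁ h_L^α`, variance bound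
`c₂ h_l^β`, cost bound `c₃ h_l^{-ρ}`, `h_l = q^{-l} h₀`, and `min(β,ρ) = β ≤ 2α`, for every
`0 < ε < e⁻¹` there is a choice of the number of levels `L` and sample numbers `M_l` making
the mean-square error at most `ε²` at total cost `O(ε^{-2-(ρ-β)/α})`. -/
theorem mlmc_complexity_rho_gt_beta (q h0 α β ρ c1 c2 c3 : ℝ)
    (hq : 1 < q) (hh0 : 0 < h0) (hα : 0 < α) (hβ : 0 < β) (hρ : 0 < ρ)
    (hc1 : 0 < c1) (hc2 : 0 < c2) (hc3 : 0 < c3)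
    (hρβ : β < ρ) (hαβ : β ≤ 2 * α)
    (h : ℕ → ℝ) (hh : ∀ l, h l = q ^ (-(l : ℤ)) * h0) :
    ∃ c4 > (0 : ℝ), ∀ ε : ℝ, 0 < ε → ε < Real.exp (-1) →
      ∃ (L : ℕ) (M : Fin (L + 1) → ℕ),
        (∀ l, 0 < M l) ∧
        c1 ^ 2 * h L ^ (2 * α) + ∑ l : Fin (L + 1), c2 * h l ^ β / (M l : ℝ) ≤ ε ^ 2 ∧
        ∑ l : Fin (L + 1), (M l : ℝ) * (c3 * h l ^ (-ρ)) ≤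
          c4 * ε ^ (-2 - (ρ - β) / α) :=
  mlmc_complexity_rho_gt_beta_general q h0 α β ρ c1 c2 c3 hq hh0 hα hρ hc1 hc2 hc3 hρβ hαβ h hh
end

section
/- Let t > 1/2 and let f : ℝ → ℂ be a continuous 1-periodic function whose Fourier coefficients ĉ_n = ∫₀¹ f(t') e^{−2πint'} dt' satisfy ∑_{n ∈ ℤ} |ĉ_n| < ∞ and E := ∑_{n ≠ 0} |n|^{2t} |ĉ_n|² < ∞. Then for every positive integer N, the trapezoidal rule error satisfies | (1/N) ∑_{k=0}^{N−1} f(k/N) − ∫₀¹ f(s) ds | ≤ ( 2 ∑_{m=1}^{∞} m^{−2t} )^{1/2} · N^{−t} · E^{1/2}; in particular the trapezoidal rule for 1-periodic functions in the Sobolev class H^t is of order O(h^t) with h = 1/N. -/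
/-!
Expand `f` in its absolutely convergent Fourier series. The `N`-point rule integrates the mode
`e^{2πinx}` exactly unless `N ∣ n`, in which case it returns `1` instead of `0` (aliasing), so the
quadrature error is `∑_{m ≠ 0} ĉ_{mN}`. Cauchy–Schwarz with the weights `|mN|^{∓2t}` bounds this by
`(∑_{m ≠ 0} |mN|^{-2t})^{1/2} E^{1/2}`, and the first factor is `(2 ζ(2t))^{1/2} N^{-t}`.
-/

open Complex Real Finset

theorem IsPrimitiveRoot.sum_range_zpow_pow {K : Type*} [Field K] {ζ : K} {N : ℕ}
    (hζ : IsPrimitiveRoot ζ N) (n : ℤ) :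
    ∑ k ∈ range N, (ζ ^ n) ^ k = if (N : ℤ) ∣ n then (N : K) else 0 := by
  split_ifs with hdvd
  · simp [(hζ.zpow_eq_one_iff_dvd n).mpr hdvd]
  · have hne : ζ ^ n ≠ 1 := mt (hζ.zpow_eq_one_iff_dvd n).mp hdvd
    have hpow : (ζ ^ n) ^ N = 1 := by
      rw [← zpow_natCast, ← zpow_mul, hζ.zpow_eq_one_iff_dvd]
      exact dvd_mul_left _ _
    rw [geom_sum_eq hne, hpow, sub_self, zero_div]

theorem Complex.sum_range_exp_two_pi_I_mul_div {N : ℕ} (hN : N ≠ 0) (n : ℤ) :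
    ∑ k ∈ range N, exp (2 * π * I * n * ((k / N : ℝ) : ℂ)) =
      if (N : ℤ) ∣ n then (N : ℂ) else 0 := by
  rw [← (isPrimitiveRoot_exp N hN).sum_range_zpow_pow n]
  refine sum_congr rfl fun k _ => ?_
  rw [← exp_int_mul, ← exp_nat_mul]
  push_cast
  ring_nf

theorem Function.Periodic.fourierCoeff_lift {f : ℝ → ℂ}
    (hper : Function.Periodic f 1) (n : ℤ) :
    haveI : Fact ((0 : ℝ) < 1) := ⟨one_pos⟩
    fourierCoeff hper.lift n = ∫ s in (0 : ℝ)..1, f s * exp (-(2 * π * I * n * s)) := by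
  rw [fourierCoeff_eq_intervalIntegral _ n 0, zero_add, div_one, one_smul]
  refine intervalIntegral.integral_congr fun x _ => ?_
  rw [fourier_coe_apply, smul_eq_mul, mul_comm]
  simp only [Function.Periodic.lift_coe]
  push_cast
  ring_nf

theorem Function.Periodic.hasSum_fourier {f : ℝ → ℂ} (hf : Continuous f)
    (hper : Function.Periodic f 1) {c : ℤ → ℂ}
    (hc : ∀ n : ℤ, c n = ∫ s in (0 : ℝ)..1, f s * exp (-(2 * π * I * n * s)))
    (hsum : Summable c) (x : ℝ) :
    HasSum (fun n : ℤ => c n * exp (2 * π * I * n * x)) (f x) := by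
  have : Fact ((0 : ℝ) < 1) := ⟨one_pos⟩
  let F : C(AddCircle (1 : ℝ), ℂ) := ⟨hper.lift, hf.quotient_liftOn' _⟩
  have hcoeff : fourierCoeff F = c := funext fun n => (hper.fourierCoeff_lift n).trans (hc n).symm
  refine (has_pointwise_sum_fourier_series_of_summable (hcoeff ▸ hsum) x).congr_fun fun n => ?_
  rw [hcoeff, fourier_coe_apply, smul_eq_mul, ofReal_one, div_one]

theorem hasSum_trapezoid_aliasing {f : ℝ → ℂ} {c : ℤ → ℂ}
    (hser : ∀ x : ℝ, HasSum (fun n : ℤ => c n * exp (2 * π * I * n * x)) (f x))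
    {N : ℕ} (hN : N ≠ 0) :
    HasSum (fun m : ℤ => c (m * N)) ((1 / (N : ℂ)) * ∑ k ∈ range N, f (k / N)) := by
  have hsum : HasSum (fun n : ℤ => c n * if (N : ℤ) ∣ n then (N : ℂ) else 0)
      (∑ k ∈ range N, f (k / N)) := by
    simp_rw [← sum_range_exp_two_pi_I_mul_div hN, mul_sum]
    exact hasSum_sum fun k _ => hser _
  have hinj : Function.Injective (fun m : ℤ => m * (N : ℤ)) :=
    mul_left_injective₀ (Int.natCast_ne_zero.mpr hN)
  rw [← hinj.hasSum_iff] at hsum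
  · rw [one_div_mul_eq_div]
    refine (hsum.div_const (N : ℂ)).congr_fun fun m => ?_
    simp only [Function.comp_apply, if_pos (dvd_mul_left _ _)]
    field_simp
  · rintro n hn
    rw [if_neg (fun ⟨m, hm⟩ => hn ⟨m, by simp [hm, mul_comm]⟩), mul_zero]

theorem tsum_eq_add_tsum_ne {α β : Type*} [AddCommGroup α] [UniformSpace α]
    [IsUniformAddGroup α] [CompleteSpace α] [T2Space α] {f : β → α} (hf : Summable f) (b : β) :
    ∑' x, f x = f b + ∑' x : {x // x ≠ b}, f x := by
  rw [← hf.tsum_subtype_add_tsum_subtype_compl {b}, tsum_singleton]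
  rfl

section CauchySchwarz

variable {ι : Type*} {f g : ι → ℝ}

theorem Real.sum_sqrt_mul_sqrt_le_sqrt_tsum_mul_sqrt_tsum (hf : ∀ i, 0 ≤ f i) (hg : ∀ i, 0 ≤ g i)
    (hfs : Summable f) (hgs : Summable g) (s : Finset ι) :
    ∑ i ∈ s, √(f i) * √(g i) ≤ √(∑' i, f i) * √(∑' i, g i) := by
  refine (Real.sum_sqrt_mul_sqrt_le s hf hg).trans ?_
  gcongr
  · exact hfs.sum_le_tsum s fun i _ => hf i
  · exact hgs.sum_le_tsum s fun i _ => hg i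

theorem Real.summable_sqrt_mul_sqrt (hf : ∀ i, 0 ≤ f i) (hg : ∀ i, 0 ≤ g i)
    (hfs : Summable f) (hgs : Summable g) : Summable fun i => √(f i) * √(g i) :=
  summable_of_sum_le (fun i => by positivity)
    (Real.sum_sqrt_mul_sqrt_le_sqrt_tsum_mul_sqrt_tsum hf hg hfs hgs)

theorem Real.tsum_sqrt_mul_sqrt_le (hf : ∀ i, 0 ≤ f i) (hg : ∀ i, 0 ≤ g i)
    (hfs : Summable f) (hgs : Summable g) :
    ∑' i, √(f i) * √(g i) ≤ √(∑' i, f i) * √(∑' i, g i) :=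
  Real.tsum_le_of_sum_le (fun i => by positivity)
    (Real.sum_sqrt_mul_sqrt_le_sqrt_tsum_mul_sqrt_tsum hf hg hfs hgs)

end CauchySchwarz

theorem Real.sqrt_rpow_neg_mul_sqrt_rpow_mul_sq {x y : ℝ} (hx : 0 < x) (hy : 0 ≤ y) (s : ℝ) :
    √(x ^ (-s)) * √(x ^ s * y ^ 2) = y := by
  rw [← Real.sqrt_mul (by positivity), ← mul_assoc, ← Real.rpow_add hx, neg_add_cancel,
    Real.rpow_zero, one_mul, Real.sqrt_sq hy]

theorem tsum_int_ne_zero_abs_rpow_neg {s : ℝ} (hs : 1 < s) :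
    ∑' n : {n : ℤ // n ≠ 0}, |(n : ℝ)| ^ (-s) = 2 * ∑' m : ℕ+, (m : ℝ) ^ (-s) := by
  have hsum := Real.summable_abs_int_rpow hs
  have h := tsum_int_eq_zero_add_two_mul_tsum_pnat (fun n => by simp) hsum
  rw [tsum_eq_add_tsum_ne hsum 0] at h
  simpa [Real.zero_rpow (by linarith : -s ≠ 0)] using h

theorem tsum_int_ne_zero_abs_mul_natCast_rpow_neg {s : ℝ} (hs : 1 < s) (N : ℕ) :
    ∑' m : {m : ℤ // m ≠ 0}, |(((m : ℤ) * N : ℤ) : ℝ)| ^ (-s) =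
      (N : ℝ) ^ (-s) * (2 * ∑' m : ℕ+, (m : ℝ) ^ (-s)) := by
  simp only [Int.cast_mul, Int.cast_natCast, abs_mul, Nat.abs_cast,
    Real.mul_rpow (abs_nonneg _) N.cast_nonneg]
  rw [tsum_mul_right, tsum_int_ne_zero_abs_rpow_neg hs, mul_comm]

theorem norm_tsum_ne_zero_comp_mul_le {E : Type*} [NormedAddCommGroup E] [CompleteSpace E]
    {t : ℝ} (ht : 1 / 2 < t) {c : ℤ → E}
    (hE : Summable fun n : {n : ℤ // n ≠ 0} => |((n : ℤ) : ℝ)| ^ (2 * t) * ‖c n‖ ^ 2)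
    {N : ℕ} (hN : 0 < N) :
    ‖∑' m : {m : ℤ // m ≠ 0}, c (m * N)‖ ≤
      √(2 * ∑' m : ℕ+, (m : ℝ) ^ (-(2 * t))) * (N : ℝ) ^ (-t) *
        √(∑' n : {n : ℤ // n ≠ 0}, |((n : ℤ) : ℝ)| ^ (2 * t) * ‖c n‖ ^ 2) := by
  have hNR : (0 : ℝ) < N := Nat.cast_pos.mpr hN
  let j : {m : ℤ // m ≠ 0} → {n : ℤ // n ≠ 0} :=
    fun m => ⟨m * N, mul_ne_zero m.2 (Int.natCast_ne_zero.mpr hN.ne')⟩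
  have hj : Function.Injective j := fun m₁ m₂ h =>
    Subtype.ext (mul_left_injective₀ (Int.natCast_ne_zero.mpr hN.ne') (congrArg Subtype.val h))
  have hpos : ∀ m, 0 < |((j m : ℤ) : ℝ)| := fun m => abs_pos.mpr (Int.cast_ne_zero.mpr (j m).2)
  let w : {m : ℤ // m ≠ 0} → ℝ := fun m => |((j m : ℤ) : ℝ)| ^ (-(2 * t))
  let v : {m : ℤ // m ≠ 0} → ℝ := fun m => |((j m : ℤ) : ℝ)| ^ (2 * t) * ‖c (j m)‖ ^ 2
  have hw0 : ∀ m, 0 ≤ w m := fun m => by positivity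
  have hv0 : ∀ m, 0 ≤ v m := fun m => by positivity
  have hws : Summable w :=
    (Real.summable_abs_int_rpow (by linarith)).comp_injective (Subtype.val_injective.comp hj)
  have hvs : Summable v := hE.comp_injective hj
  have hterm : ∀ m : {m : ℤ // m ≠ 0}, ‖c (m * N)‖ = √(w m) * √(v m) := fun m =>
    (Real.sqrt_rpow_neg_mul_sqrt_rpow_mul_sq (hpos m) (norm_nonneg _) _).symm
  have hw_eq : ∑' m, w m = (N : ℝ) ^ (-(2 * t)) * (2 * ∑' m : ℕ+, (m : ℝ) ^ (-(2 * t))) :=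
    tsum_int_ne_zero_abs_mul_natCast_rpow_neg (by linarith) N
  have hv_le : ∑' m, v m ≤ ∑' n : {n : ℤ // n ≠ 0}, |((n : ℤ) : ℝ)| ^ (2 * t) * ‖c n‖ ^ 2 :=
    hvs.tsum_le_tsum_of_inj j hj (fun n _ => by positivity) (fun _ => le_rfl) hE
  have hsqrtN : √((N : ℝ) ^ (-(2 * t))) = (N : ℝ) ^ (-t) := by
    rw [Real.sqrt_eq_rpow, ← Real.rpow_mul hNR.le]
    ring_nf
  calc ‖∑' m : {m : ℤ // m ≠ 0}, c (m * N)‖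
      ≤ ∑' m : {m : ℤ // m ≠ 0}, ‖c (m * N)‖ := by
        refine norm_tsum_le_tsum_norm ?_
        simpa only [hterm] using Real.summable_sqrt_mul_sqrt hw0 hv0 hws hvs
    _ = ∑' m, √(w m) * √(v m) := tsum_congr hterm
    _ ≤ √(∑' m, w m) * √(∑' m, v m) := Real.tsum_sqrt_mul_sqrt_le hw0 hv0 hws hvs
    _ ≤ _ := by
        rw [hw_eq, Real.sqrt_mul (by positivity), hsqrtN, mul_comm ((N : ℝ) ^ (-t))]
        gcongr

/-- Trapezoidal rule error for 1-periodic functions of Sobolev class `H^t`, `t > 1/2`: the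
`N`-point equal-weight quadrature error is bounded by `(2 ∑_{m≥1} m^{-2t})^{1/2} N^{-t} E^{1/2}`
where `E = ∑_{n ≠ 0} |n|^{2t} |ĉ_n|²`; in particular the rule is of order `O(h^t)`, `h = 1/N`. -/
theorem trapezoidal_rule_sobolev_error (t : ℝ) (ht : 1 / 2 < t)
    (f : ℝ → ℂ) (hf : Continuous f) (hper : Function.Periodic f 1)
    (c : ℤ → ℂ)
    (hc : ∀ n : ℤ, c n = ∫ s in (0:ℝ)..1,
      f s * Complex.exp (-(2 * (Real.pi : ℂ) * Complex.I * (n : ℂ) * (s : ℂ))))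
    (hsum : Summable fun n : ℤ => ‖c n‖)
    (hE : Summable fun n : {n : ℤ // n ≠ 0} => |((n : ℤ) : ℝ)| ^ (2 * t) * ‖c n‖ ^ 2) :
    ∀ N : ℕ, 0 < N →
      ‖(1 / (N : ℂ)) * ∑ k ∈ Finset.range N, f ((k : ℝ) / N) - ∫ s in (0:ℝ)..1, f s‖ ≤
        Real.sqrt (2 * ∑' m : ℕ+, (m : ℝ) ^ (-(2 * t))) * (N : ℝ) ^ (-t) *
          Real.sqrt (∑' n : {n : ℤ // n ≠ 0}, |((n : ℤ) : ℝ)| ^ (2 * t) * ‖c n‖ ^ 2) := by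
  intro N hN
  have hser := hper.hasSum_fourier hf hc hsum.of_norm
  have hmult : Summable fun m : ℤ => c (m * N) :=
    hsum.of_norm.comp_injective (mul_left_injective₀ (Int.natCast_ne_zero.mpr hN.ne'))
  have hint : ∫ s in (0:ℝ)..1, f s = c 0 := by simp [hc]
  rw [← (hasSum_trapezoid_aliasing hser hN.ne').tsum_eq, tsum_eq_add_tsum_ne hmult 0, hint,
    zero_mul, add_sub_cancel_left]
  exact norm_tsum_ne_zero_comp_mul_le ht hE hN
end
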